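/- Let L be a finite lattice expressed as a union of sublattices A₁, …, A_m, each containing the bounds o and i of L, such that any two distinct Aⱼ, A_k intersect exactly in {o, i}. If θ is an equivalence relation on L whose restriction to each Aⱼ is a congruence of Aⱼ having {o} and {i} as singleton blocks, and any two elements of L \ {o,i} lying in distinct components Aⱼ, A_k are complementary (their meet is o, their join is i), then θ is a congruence of L. -/

import Mathlib

set_option linter.unusedVariables false

/-- A lattice congruence: an equivalence relation compatible with `⊔` and `⊓`. -/
structure LatticeCongruence (L : Type*) [Lattice L] : Type _ where
  r : L → L → Prop
  refl : ∀ x, r x x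
  symm : ∀ {x y}, r x y → r y x
  trans : ∀ {x y z}, r x y → r y z → r x z
  sup : ∀ {a b c d}, r a b → r c d → r (a ⊔ c) (b ⊔ d)
  inf : ∀ {a b c d}, r a b → r c d → r (a ⊓ c) (b ⊓ d)

namespace LatticeCongruence

variable {L : Type*} [Lattice L]

theorem ext' {c d : LatticeCongruence L} (h : c.r = d.r) : c = d := by
  cases c; cases d; cases h; rfl

instance : PartialOrder (LatticeCongruence L) where
  le c d := ∀ x y, c.r x y → d.r x y
  le_refl _ _ _ h := h
  le_trans _ _ _ hab hbc x y h := hbc x y (hab x y h)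
  le_antisymm a b hab hba :=
    ext' (by funext x y; exact propext ⟨hab x y, hba x y⟩)

instance : InfSet (LatticeCongruence L) where
  sInf S :=
    { r := fun x y => ∀ c ∈ S, c.r x y
      refl := fun x c _ => c.refl x
      symm := fun h c hc => c.symm (h c hc)
      trans := fun h1 h2 c hc => c.trans (h1 c hc) (h2 c hc)
      sup := fun h1 h2 c hc => c.sup (h1 c hc) (h2 c hc)
      inf := fun h1 h2 c hc => c.inf (h1 c hc) (h2 c hc) }

/-- The complete lattice `Con L` of congruences of `L`. -/
instance : CompleteLattice (LatticeCongruence L) :=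
  completeLatticeOfInf _ fun S =>
    ⟨fun c hc x y h => h c hc, fun b hb x y h c hc => hb hc x y h⟩

end LatticeCongruence

/-- `latticeCon a b` is the principal congruence `con(a,b)`, the smallest congruence
collapsing `a` and `b`. -/
def latticeCon {L : Type*} [Lattice L] (a b : L) : LatticeCongruence L :=
  sInf {c : LatticeCongruence L | c.r a b}

/-! A pair `a ≠ b` collapsed by `θ` lies in a single component `A j` and avoids the bounds.
Translating it by `c ∈ A j` is handled by the congruence on `A j`; for any other `c`,
complementarity gives `a ⊔ c = b ⊔ c = ⊤` and `a ⊓ c = b ⊓ c = ⊥`. Compatibility with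
translations is all an equivalence relation needs to be a lattice congruence. -/

namespace LatticeCongruence

variable {L : Type*} [Lattice L]

def ofTranslations (θ : L → L → Prop) (hequiv : Equivalence θ)
    (hsup : ∀ {a b} c, θ a b → θ (a ⊔ c) (b ⊔ c))
    (hinf : ∀ {a b} c, θ a b → θ (a ⊓ c) (b ⊓ c)) : LatticeCongruence L where
  r := θ
  refl := hequiv.refl
  symm := hequiv.symm
  trans := hequiv.trans
  sup {_ b c _} hab hcd :=
    hequiv.trans (hsup c hab) (by simpa only [sup_comm b] using hsup b hcd)
  inf {_ b c _} hab hcd :=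
    hequiv.trans (hinf c hab) (by simpa only [inf_comm b] using hinf b hcd)

end LatticeCongruence

theorem Equivalence.ne_of_rel_of_ne_of_singleton_class {α : Type*} {θ : α → α → Prop}
    (hequiv : Equivalence θ) {x : α} (hx : ∀ y, θ y x → y = x) {a b : α} (hab : θ a b)
    (hne : a ≠ b) : a ≠ x ∧ b ≠ x := by
  refine ⟨fun ha => hne ?_, fun hb => hne ?_⟩
  · subst ha; exact (hx b (hequiv.symm hab)).symm
  · subst hb; exact hx a hab

theorem rel_sup_inf_right_of_components
    {L : Type*} [Lattice L] [BoundedOrder L] {ι : Type*} (A : ι → Set L)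
    (hbounds : ∀ j, (⊥ : L) ∈ A j ∧ (⊤ : L) ∈ A j)
    (hcover : ∀ x : L, ∃ j, x ∈ A j)
    {θ : L → L → Prop} (hequiv : Equivalence θ)
    (hwithin : ∀ x y, θ x y → x = y ∨ ∃ j, x ∈ A j ∧ y ∈ A j)
    (hlocal : ∀ j, ∀ a ∈ A j, ∀ b ∈ A j, ∀ c ∈ A j, ∀ d ∈ A j,
      θ a b → θ c d → θ (a ⊔ c) (b ⊔ d) ∧ θ (a ⊓ c) (b ⊓ d))
    (hbot : ∀ x, θ x ⊥ → x = ⊥) (htop : ∀ x, θ x ⊤ → x = ⊤)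
    (hcompl : ∀ j k, j ≠ k → ∀ x ∈ A j, ∀ y ∈ A k,
      x ≠ ⊥ → x ≠ ⊤ → y ≠ ⊥ → y ≠ ⊤ → x ⊓ y = ⊥ ∧ x ⊔ y = ⊤)
    {a b : L} (hab : θ a b) (c : L) : θ (a ⊔ c) (b ⊔ c) ∧ θ (a ⊓ c) (b ⊓ c) := by
  by_cases hne : a = b
  · subst hne; exact ⟨hequiv.refl _, hequiv.refl _⟩
  obtain ⟨j, haj, hbj⟩ := (hwithin a b hab).resolve_left hne
  by_cases hcj : c ∈ A j
  · exact hlocal j a haj b hbj c hcj c hcj hab (hequiv.refl c)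
  obtain ⟨k, hck⟩ := hcover c
  have hjk : j ≠ k := by rintro rfl; exact hcj hck
  obtain ⟨ha0, hb0⟩ := hequiv.ne_of_rel_of_ne_of_singleton_class hbot hab hne
  obtain ⟨ha1, hb1⟩ := hequiv.ne_of_rel_of_ne_of_singleton_class htop hab hne
  have hc0 : c ≠ ⊥ := by rintro rfl; exact hcj (hbounds j).1
  have hc1 : c ≠ ⊤ := by rintro rfl; exact hcj (hbounds j).2
  obtain ⟨hac_inf, hac_sup⟩ := hcompl j k hjk a haj c hck ha0 ha1 hc0 hc1
  obtain ⟨hbc_inf, hbc_sup⟩ := hcompl j k hjk b hbj c hck hb0 hb1 hc0 hc1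
  rw [hac_inf, hac_sup, hbc_inf, hbc_sup]
  exact ⟨hequiv.refl _, hequiv.refl _⟩

theorem union_of_compatible_internal_congruences_general
    {L : Type*} [Lattice L] [BoundedOrder L]
    {ι : Type*} (A : ι → Set L)
    (hbounds : ∀ j, (⊥ : L) ∈ A j ∧ (⊤ : L) ∈ A j)
    (hcover : ∀ x : L, ∃ j, x ∈ A j)
    (θ : L → L → Prop) (hequiv : Equivalence θ)
    (hwithin : ∀ x y, θ x y → x = y ∨ ∃ j, x ∈ A j ∧ y ∈ A j)
    (hlocal : ∀ j, ∀ a ∈ A j, ∀ b ∈ A j, ∀ c ∈ A j, ∀ d ∈ A j,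
      θ a b → θ c d → θ (a ⊔ c) (b ⊔ d) ∧ θ (a ⊓ c) (b ⊓ d))
    (hbot : ∀ x, θ x ⊥ → x = ⊥) (htop : ∀ x, θ x ⊤ → x = ⊤)
    (hcompl : ∀ j k, j ≠ k → ∀ x ∈ A j, ∀ y ∈ A k,
      x ≠ ⊥ → x ≠ ⊤ → y ≠ ⊥ → y ≠ ⊤ → x ⊓ y = ⊥ ∧ x ⊔ y = ⊤) :
    ∃ c : LatticeCongruence L, ∀ x y, c.r x y ↔ θ x y := by
  have translate := fun {a b : L} (hab : θ a b) (c : L) =>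
    rel_sup_inf_right_of_components A hbounds hcover hequiv hwithin hlocal hbot htop hcompl hab c
  exact ⟨.ofTranslations θ hequiv (fun c h => (translate h c).1) (fun c h => (translate h c).2),
    fun _ _ => Iff.rfl⟩

/-- if a finite bounded lattice `L` is a union of `{⊥, ⊤}`-sublattices
pairwise intersecting in `{⊥, ⊤}`, and `θ` is an equivalence relation which holds only
within components, restricts to a congruence with singleton blocks `{⊥}` and `{⊤}` on each
component, and elements of distinct components (off the bounds) are complementary, then `θ`
is a congruence of `L`. -/
theorem union_of_compatible_internal_congruences
    {L : Type*} [Lattice L] [Fintype L] [BoundedOrder L]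
    {ι : Type*} (A : ι → Set L)
    (hsub : ∀ j, ∀ x ∈ A j, ∀ y ∈ A j, x ⊔ y ∈ A j ∧ x ⊓ y ∈ A j)
    (hbounds : ∀ j, (⊥ : L) ∈ A j ∧ (⊤ : L) ∈ A j)
    (hcover : ∀ x : L, ∃ j, x ∈ A j)
    (hinter : ∀ j k, j ≠ k → A j ∩ A k = {(⊥ : L), (⊤ : L)})
    (θ : L → L → Prop) (hequiv : Equivalence θ)
    (hwithin : ∀ x y, θ x y → x = y ∨ ∃ j, x ∈ A j ∧ y ∈ A j)
    (hlocal : ∀ j, ∀ a ∈ A j, ∀ b ∈ A j, ∀ c ∈ A j, ∀ d ∈ A j,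
      θ a b → θ c d → θ (a ⊔ c) (b ⊔ d) ∧ θ (a ⊓ c) (b ⊓ d))
    (hbot : ∀ x, θ x ⊥ → x = ⊥) (htop : ∀ x, θ x ⊤ → x = ⊤)
    (hcompl : ∀ j k, j ≠ k → ∀ x ∈ A j, ∀ y ∈ A k,
      x ≠ ⊥ → x ≠ ⊤ → y ≠ ⊥ → y ≠ ⊤ → x ⊓ y = ⊥ ∧ x ⊔ y = ⊤) :
    ∃ c : LatticeCongruence L, ∀ x y, c.r x y ↔ θ x y :=
  union_of_compatible_internal_congruences_general A hbounds hcover θ hequiv hwithin hlocal hbot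
    htop hcompl
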